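/- The minimal spectral weight of a SUM-covering of the matrix D₂ = [[1,1],[1,0]] equals 1+√2, attained by covering with one 1×2 (or 2×1) rectangle and one 1×1 rectangle. -/

import Mathlib

/-!
The lower bound is weak LP duality. The functional
`φ(M) = (√2 - 1) M₀₀ + M₀₁ + M₁₀ - M₁₁` is additive, equals `1 + √2` on `D₂`, and is at most
the spectral weight of every rectangle, so it bounds the weight of every covering from below.
Equality holds for the row `{0} × {0, 1}` together with the cell `(1, 0)`.
-/

/-- A rank-1 0/1 matrix (rectangle). -/
def IsRectangle {m n : ℕ} (R : Matrix (Fin m) (Fin n) ℤ) : Prop :=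
  ∃ u v, (∀ x, u x = 0 ∨ u x = 1) ∧ (∀ y, v y = 0 ∨ v y = 1) ∧
    R = Matrix.vecMulVec u v

/-- Spectral weight √(ab) of a rectangle, where a (resp. b) is the number of
nonzero rows (resp. columns). -/
noncomputable def specWeight {m n : ℕ} (R : Matrix (Fin m) (Fin n) ℤ) : ℝ :=
  Real.sqrt (((@Finset.filter _ (fun i => ∃ j, R i j ≠ 0) (fun _ => inferInstance) Finset.univ).card : ℝ) *
    ((@Finset.filter _ (fun j => ∃ i, R i j ≠ 0) (fun _ => inferInstance) Finset.univ).card : ℝ))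

open Matrix Finset

theorem specWeight_vecMulVec {m n : ℕ} (u : Fin m → ℤ) (v : Fin n → ℤ) :
    specWeight (vecMulVec u v) = √((#{i | u i ≠ 0} : ℝ) * #{j | v j ≠ 0}) := by
  by_cases hu : ∃ i, u i ≠ 0
  · by_cases hv : ∃ j, v j ≠ 0
    · unfold specWeight
      congr 4 <;> ext <;> simp [vecMulVec_apply, hu, hv]
    · push Not at hv
      simp [specWeight, vecMulVec_apply, hv]
  · push Not at hu
    simp [specWeight, vecMulVec_apply, hu]

theorem card_filter_ne_zero_eq_sum {ι : Type*} [Fintype ι] {u : ι → ℤ}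
    (hu : ∀ i, u i = 0 ∨ u i = 1) : (#{i | u i ≠ 0} : ℤ) = ∑ i, u i := by
  rw [card_filter]
  push_cast
  refine sum_congr rfl fun i _ => ?_
  rcases hu i with h | h <;> simp [h]

@[simps]
noncomputable def dualWeight : Matrix (Fin 2) (Fin 2) ℤ →+ ℝ where
  toFun M := (√2 - 1) * M 0 0 + M 0 1 + M 1 0 - M 1 1
  map_zero' := by simp
  map_add' M N := by simp only [Matrix.add_apply, Int.cast_add]; ring

theorem dualWeight_le_specWeight {R : Matrix (Fin 2) (Fin 2) ℤ} (hR : IsRectangle R) :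
    dualWeight R ≤ specWeight R := by
  obtain ⟨u, v, hu, hv, rfl⟩ := hR
  have hcard_u : (#{i | u i ≠ 0} : ℝ) = u 0 + u 1 := by
    exact_mod_cast (card_filter_ne_zero_eq_sum hu).trans (Fin.sum_univ_two u)
  have hcard_v : (#{j | v j ≠ 0} : ℝ) = v 0 + v 1 := by
    exact_mod_cast (card_filter_ne_zero_eq_sum hv).trans (Fin.sum_univ_two v)
  have h4 : √4 = 2 := by rw [show (4 : ℝ) = 2 ^ 2 by norm_num, Real.sqrt_sq zero_le_two]
  rw [specWeight_vecMulVec, hcard_u, hcard_v]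
  simp only [dualWeight_apply, vecMulVec_apply, Int.cast_mul]
  rcases hu 0 with a | a <;> rcases hu 1 with b | b <;> rcases hv 0 with c | c <;>
    rcases hv 1 with d | d <;> simp only [a, b, c, d] <;> norm_num [h4]

theorem dualWeight_D₂ : dualWeight !![1, 1; 1, 0] = 1 + √2 := by
  simp only [dualWeight_apply, of_apply, cons_val', cons_val_zero, cons_val_one, empty_val',
    cons_val_fin_one, Int.cast_one, Int.cast_zero]
  ring

/-- The minimal spectral weight of a SUM-covering of D₂ = [[1,1],[1,0]]
equals 1+√2, and is attained. -/
theorem stmt_6 :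
    IsLeast {s : ℝ | ∃ L : List (Matrix (Fin 2) (Fin 2) ℤ),
        (∀ R ∈ L, IsRectangle R) ∧ L.sum = !![1, 1; 1, 0] ∧
          s = (L.map specWeight).sum}
      (1 + Real.sqrt 2) := by
  constructor
  · refine ⟨[vecMulVec ![1, 0] ![1, 1], vecMulVec ![0, 1] ![1, 0]], ?_, by decide, ?_⟩
    · simp only [List.mem_cons, List.not_mem_nil, or_false, forall_eq_or_imp, forall_eq]
      exact ⟨⟨_, _, by decide, by decide, rfl⟩, ⟨_, _, by decide, by decide, rfl⟩⟩
    · simp only [List.map_cons, List.map_nil, List.sum_cons, List.sum_nil, specWeight_vecMulVec]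
      simp [card_filter, Fin.sum_univ_two, add_comm]
  · rintro s ⟨L, hrect, hsum, rfl⟩
    calc 1 + √2 = dualWeight L.sum := by rw [hsum, dualWeight_D₂]
      _ = (L.map dualWeight).sum := map_list_sum _ _
      _ ≤ (L.map specWeight).sum :=
          List.sum_le_sum fun R hR => dualWeight_le_specWeight (hrect R hR)
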